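/- arXiv:2502.06247 — 2 statements merged into one kernel-verified Lean document; each statement's English description precedes it below -/
import Mathlib

section
/- Let C be the F_2-linear subspace of F_2^14 spanned by the six vectors (written as (a|b) with a,b ∈ F_2^7): (1111000|0000000), (0000000|1100000), (0000000|0011000), (1100100|0000011), (0011010|0000101), (0000011|0110100). Then dim C = 6 and C is self-orthogonal with respect to the symplectic inner product, i.e., C ⊆ C^⊥s. -/
/-- The symplectic inner product on `F_2^14 = F_2^7 × F_2^7` (written as one vector of
length 14, the first 7 components being `a` and the last 7 being `b` in `(a|b)`):
`⟨(a|b),(c|d)⟩_s = ⟨a,d⟩_E − ⟨b,c⟩_E`. -/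
def symp14 (x y : Fin 14 → ZMod 2) : ZMod 2 :=
  ∑ i : Fin 7, (x ⟨i.val, by omega⟩ * y ⟨i.val + 7, by omega⟩
    - x ⟨i.val + 7, by omega⟩ * y ⟨i.val, by omega⟩)

/-- The six generators of `f(S)` from Example 1. -/
def genSet : Set (Fin 14 → ZMod 2) :=
  { ![1,1,1,1,0,0,0, 0,0,0,0,0,0,0],
    ![0,0,0,0,0,0,0, 1,1,0,0,0,0,0],
    ![0,0,0,0,0,0,0, 0,0,1,1,0,0,0],
    ![1,1,0,0,1,0,0, 0,0,0,0,0,1,1],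
    ![0,0,1,1,0,1,0, 0,0,0,0,1,0,1],
    ![0,0,0,0,0,1,1, 0,1,1,0,1,0,0] }

/-- The six generators as an indexed family. -/
def vgen : Fin 6 → (Fin 14 → ZMod 2) :=
  ![![1,1,1,1,0,0,0, 0,0,0,0,0,0,0],
    ![0,0,0,0,0,0,0, 1,1,0,0,0,0,0],
    ![0,0,0,0,0,0,0, 0,0,1,1,0,0,0],
    ![1,1,0,0,1,0,0, 0,0,0,0,0,1,1],
    ![0,0,1,1,0,1,0, 0,0,0,0,1,0,1],
    ![0,0,0,0,0,1,1, 0,1,1,0,1,0,0]]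

lemma genSet_eq : genSet = Set.range vgen := by
  ext x
  simp [genSet, vgen, Matrix.range_cons, Matrix.range_empty]
  tauto

lemma symp_add_left (x x' y : Fin 14 → ZMod 2) :
    symp14 (x + x') y = symp14 x y + symp14 x' y := by
  unfold symp14
  rw [← Finset.sum_add_distrib]
  exact Finset.sum_congr rfl fun i _ => by simp only [Pi.add_apply]; ring

lemma symp_smul_left (c : ZMod 2) (x y : Fin 14 → ZMod 2) :
    symp14 (c • x) y = c * symp14 x y := by
  unfold symp14
  rw [Finset.mul_sum]
  exact Finset.sum_congr rfl fun i _ => by simp only [Pi.smul_apply, smul_eq_mul]; ring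

lemma symp_add_right (x y y' : Fin 14 → ZMod 2) :
    symp14 x (y + y') = symp14 x y + symp14 x y' := by
  unfold symp14
  rw [← Finset.sum_add_distrib]
  exact Finset.sum_congr rfl fun i _ => by simp only [Pi.add_apply]; ring

lemma symp_smul_right (c : ZMod 2) (x y : Fin 14 → ZMod 2) :
    symp14 x (c • y) = c * symp14 x y := by
  unfold symp14
  rw [Finset.mul_sum]
  exact Finset.sum_congr rfl fun i _ => by simp only [Pi.smul_apply, smul_eq_mul]; ring

lemma gen_orth : ∀ i j : Fin 6, symp14 (vgen i) (vgen j) = 0 := by decide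

lemma vgen_li : LinearIndependent (ZMod 2) vgen := by
  rw [Fintype.linearIndependent_iff]
  decide

/-- the span `C` of the six listed vectors has dimension 6 and is
self-orthogonal for the symplectic inner product, i.e. `C ⊆ C^⊥s`. -/
theorem stmt0 :
    Module.finrank (ZMod 2) (Submodule.span (ZMod 2) genSet) = 6 ∧
    ∀ x ∈ Submodule.span (ZMod 2) genSet, ∀ y ∈ Submodule.span (ZMod 2) genSet,
      symp14 x y = 0 := by
  rw [genSet_eq]
  constructor
  · rw [finrank_span_eq_card vgen_li]; simp
  · intro x hx y hy
    induction hx using Submodule.span_induction with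
    | mem x hx =>
      induction hy using Submodule.span_induction with
      | mem y hy =>
        obtain ⟨i, rfl⟩ := hx
        obtain ⟨j, rfl⟩ := hy
        exact gen_orth i j
      | zero => simp [symp14]
      | add a b _ _ ha hb => rw [symp_add_right, ha, hb, add_zero]
      | smul c a _ ha => rw [symp_smul_right, ha, mul_zero]
    | zero => simp [symp14]
    | add a b _ _ ha hb => rw [symp_add_left, ha, hb, add_zero]
    | smul c a _ ha => rw [symp_smul_left, ha, mul_zero]
end

section
/- Let C be the F_2-linear subspace of F_2^14 spanned by the six vectors (1111000|0000000), (0000000|1100000), (0000000|0011000), (1100100|0000011), (0011010|0000101), (0000011|0110100). For the index set J̄ = {1,2,3,4}, the J̄-zero subcode {v ∈ C : v_i = 0 for all i ∈ {1,2,3,4,8,9,10,11}} has dimension 1. In particular, dim C_{(s)}^{(J̄)} + 2|J̄| = 1 + 8 ≠ 6 = dim C, so the advance-shareability condition dim f(S)_{(s)}^{(J̄)} = dim f(S) − 2|J̄| of the EAQECC-based scheme fails for J̄, even though J̄ is a forbidden set. -/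
/-- The subspace of vectors of `F_2^14` vanishing on a given set of coordinates. -/
def zeroAt (T : Set (Fin 14)) : Submodule (ZMod 2) (Fin 14 → ZMod 2) where
  carrier := {v | ∀ i ∈ T, v i = 0}
  zero_mem' := by intro i _; rfl
  add_mem' := by
    intro a b ha hb i hi
    simp [Pi.add_apply, ha i hi, hb i hi]
  smul_mem' := by
    intro c a ha i hi
    simp [Pi.smul_apply, ha i hi]

/-- The coordinates to be zero for the index set `J̄ = {1,2,3,4}` (1-indexed positions
`1,2,3,4` and `8,9,10,11`, i.e. 0-indexed `0,1,2,3` and `7,8,9,10`). -/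
def Jbarcoords : Set (Fin 14) := {0, 1, 2, 3, 7, 8, 9, 10}

def vecsX : Fin 6 → (Fin 14 → ZMod 2) :=
  ![![1,1,1,1,0,0,0, 0,0,0,0,0,0,0],
    ![0,0,0,0,0,0,0, 1,1,0,0,0,0,0],
    ![0,0,0,0,0,0,0, 0,0,1,1,0,0,0],
    ![1,1,0,0,1,0,0, 0,0,0,0,0,1,1],
    ![0,0,1,1,0,1,0, 0,0,0,0,1,0,1],
    ![0,0,0,0,0,1,1, 0,1,1,0,1,0,0]]

def wX : Fin 14 → ZMod 2 := ![0,0,0,0,1,1,0, 0,0,0,0,1,1,0]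

lemma range_vecsX : Set.range vecsX = genSet := by
  simp only [vecsX, genSet, Matrix.range_cons, Matrix.range_empty, Set.union_empty,
    Set.insert_union]
  rfl

lemma indep_vecsX : LinearIndependent (ZMod 2) vecsX := by
  rw [Fintype.linearIndependent_iff]
  decide

lemma hwcomb : wX = vecsX 0 + vecsX 3 + vecsX 4 := by decide

lemma inf_eq :
    Submodule.span (ZMod 2) genSet ⊓ zeroAt Jbarcoords
      = Submodule.span (ZMod 2) {wX} := by
  apply le_antisymm
  · rintro x ⟨hx, hz⟩
    rw [SetLike.mem_coe, ← range_vecsX, Submodule.mem_span_range_iff_exists_fun] at hx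
    obtain ⟨c, rfl⟩ := hx
    have main : ∀ c : Fin 6 → ZMod 2,
        (∑ i, c i • vecsX i) 0 = 0 → (∑ i, c i • vecsX i) 2 = 0 →
        (∑ i, c i • vecsX i) 7 = 0 → (∑ i, c i • vecsX i) 8 = 0 →
        (∑ i, c i • vecsX i) 9 = 0 → c 0 • wX = ∑ i, c i • vecsX i := by decide
    rw [Submodule.mem_span_singleton]
    exact ⟨c 0, main c (hz 0 (by simp [Jbarcoords])) (hz 2 (by simp [Jbarcoords]))
      (hz 7 (by simp [Jbarcoords])) (hz 8 (by simp [Jbarcoords]))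
      (hz 9 (by simp [Jbarcoords]))⟩
  · rw [Submodule.span_le, Set.singleton_subset_iff]
    constructor
    · rw [← range_vecsX, hwcomb]
      exact add_mem (add_mem (Submodule.subset_span ⟨0, rfl⟩)
        (Submodule.subset_span ⟨3, rfl⟩)) (Submodule.subset_span ⟨4, rfl⟩)
    · intro i hi
      simp only [Jbarcoords, Set.mem_insert_iff, Set.mem_singleton_iff] at hi
      rcases hi with rfl|rfl|rfl|rfl|rfl|rfl|rfl|rfl <;> rfl

/-- for `J̄ = {1,2,3,4}` the `J̄`-zero subcode of `C` has dimension 1,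
while `dim C = 6`; hence `dim C_{(s)}^{(J̄)} + 2|J̄| = 1 + 8 ≠ 6 = dim C`, so the
advance-shareability condition of the EAQECC-based scheme fails for `J̄`. -/
theorem stmt3 :
    Module.finrank (ZMod 2) ↥(Submodule.span (ZMod 2) genSet ⊓ zeroAt Jbarcoords) = 1 ∧
    Module.finrank (ZMod 2) ↥(Submodule.span (ZMod 2) genSet) = 6 ∧
    Module.finrank (ZMod 2) ↥(Submodule.span (ZMod 2) genSet ⊓ zeroAt Jbarcoords) + 2 * 4 ≠
      Module.finrank (ZMod 2) ↥(Submodule.span (ZMod 2) genSet) := by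
  have h1 : Module.finrank (ZMod 2) ↥(Submodule.span (ZMod 2) genSet ⊓ zeroAt Jbarcoords) = 1 := by
    rw [inf_eq]
    exact finrank_span_singleton (by decide)
  have h6 : Module.finrank (ZMod 2) ↥(Submodule.span (ZMod 2) genSet) = 6 := by
    rw [← range_vecsX, finrank_span_eq_card indep_vecsX]
    simp
  exact ⟨h1, h6, by omega⟩
end
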